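/- arXiv:2408.12688 — 2 statements merged into one kernel-verified Lean document; each statement's English description precedes it below -/
import Mathlib

section
/- Let f: X → X be a continuum-wise expansive homeomorphism of a compact metric space (X,d) with more than one point, let c > 0 be a cw-expansive constant of f, and let ε ∈ (0, c/2). If there exist x, y ∈ X such that the sets C^s(x) := ⋃_{n∈ℕ} f^{-n}(C^s_ε(f^n(x))) and C^u(y) := ⋃_{n∈ℕ} f^{n}(C^u_ε(f^{-n}(y))) are dense in X, then the induced map C(f) on the hyperspace of continua C(X) does not have the shadowing property. -/
open Set Metric Filter Function

/-- The `n`-th iterate over `ℤ` of the invertible system with forward map `g`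
and backward map `ginv`. -/
def iterZ {X : Type*} (g ginv : X → X) : ℤ → X → X
  | Int.ofNat n => g^[n]
  | Int.negSucc n => ginv^[n + 1]

/-- Two-sided shadowing property for an invertible system `(g, ginv)`. -/
def ShadowingZ {X : Type*} [MetricSpace X] (g ginv : X → X) : Prop :=
  ∀ ε > 0, ∃ δ > 0, ∀ x : ℤ → X,
    (∀ n : ℤ, dist (g (x n)) (x (n + 1)) < δ) →
      ∃ y : X, ∀ n : ℤ, dist (iterZ g ginv n y) (x n) < ε

/-- One-sided shadowing property for a map `g`. -/
def ShadowingN {X : Type*} [MetricSpace X] (g : X → X) : Prop :=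
  ∀ ε > 0, ∃ δ > 0, ∀ x : ℕ → X,
    (∀ n : ℕ, dist (g (x n)) (x (n + 1)) < δ) →
      ∃ y : X, ∀ n : ℕ, dist (g^[n] y) (x n) < ε

/-- The hyperspace of (nonempty) subcontinua of `X`, with the Hausdorff metric. -/
abbrev Continua (X : Type*) [MetricSpace X] : Type _ :=
  {A : TopologicalSpace.NonemptyCompacts X // IsConnected (A : Set X)}

/-- The induced map `C(f)` on the hyperspace of continua. -/
def inducedC {X : Type*} [MetricSpace X] (f : X → X) (hf : Continuous f) :
    Continua X → Continua X := fun A =>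
  ⟨⟨⟨f '' (A.1 : Set X), A.1.isCompact.image hf⟩, A.1.nonempty.image f⟩,
    A.2.image f hf.continuousOn⟩

/-- The `c`-stable set of `x` for the map `g`. -/
def Ws {X : Type*} [MetricSpace X] (g : X → X) (c : ℝ) (x : X) : Set X :=
  {y | ∀ k : ℕ, dist (g^[k] y) (g^[k] x) ≤ c}

/-- Topological transitivity. -/
def TransitiveMap {X : Type*} [TopologicalSpace X] (g : X → X) : Prop :=
  ∀ U V : Set X, IsOpen U → IsOpen V → U.Nonempty → V.Nonempty →
    ∃ n : ℕ, ((g^[n] '' U) ∩ V).Nonempty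

/-- `A` is a quasi-attractor of `g`. -/
def QuasiAttractor {X : Type*} [TopologicalSpace X] (g : X → X) (A : Set X) : Prop :=
  IsCompact A ∧ g '' A = A ∧
    ∀ U : Set X, IsOpen U → A ⊆ U →
      ∃ V : Set X, IsOpen V ∧ A ⊆ V ∧ V ⊆ U ∧ closure (g '' V) ⊆ V

/-- `A` is a quasi-attractor of the restriction of `g` to the invariant set `s`. -/
def QuasiAttractorOn {X : Type*} [TopologicalSpace X] (g : X → X) (s A : Set X) : Prop :=
  IsCompact A ∧ A ⊆ s ∧ g '' A = A ∧
    ∀ U : Set X, IsOpen U → A ⊆ U →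
      ∃ V : Set X, IsOpen V ∧ A ⊆ V ∧ V ∩ s ⊆ U ∧ closure (g '' (V ∩ s)) ∩ s ⊆ V

/-- Shadowing property for the restriction of the invertible system `(g, ginv)`
to an invariant set `s`. -/
def ShadowingZOn {X : Type*} [MetricSpace X] (g ginv : X → X) (s : Set X) : Prop :=
  ∀ ε > 0, ∃ δ > 0, ∀ x : ℤ → X, (∀ n : ℤ, x n ∈ s) →
    (∀ n : ℤ, dist (g (x n)) (x (n + 1)) < δ) →
      ∃ y ∈ s, ∀ n : ℤ, dist (iterZ g ginv n y) (x n) < ε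

/-- `(X, f)` is a simple dynamical system with quasi-attractor fixed point `p`
and quasi-repeller fixed point `q`. -/
def SimpleSystem {X : Type*} [MetricSpace X] (f : X ≃ₜ X) (p q : X) : Prop :=
  f p = p ∧ f q = q ∧ QuasiAttractor ⇑f {p} ∧ QuasiAttractor ⇑f.symm {q} ∧
    ∀ x : X, x ≠ p → x ≠ q →
      Tendsto (fun n : ℕ => (⇑f)^[n] x) atTop (nhds p) ∧
      Tendsto (fun n : ℕ => (⇑f.symm)^[n] x) atTop (nhds q)

section Aux

variable {X : Type*} [MetricSpace X]

variable [CompactSpace X] in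
private lemma aux_bounded (s : Set X) : Bornology.IsBounded s :=
  (isCompact_univ.isBounded).subset (subset_univ s)

variable [CompactSpace X] in
private lemma aux_ne_top {s t : Set X} (hs : s.Nonempty) (ht : t.Nonempty) :
    EMetric.hausdorffEdist s t ≠ ⊤ :=
  hausdorffEdist_ne_top_of_nonempty_of_bounded hs ht (aux_bounded s) (aux_bounded t)

variable [CompactSpace X] in
private lemma aux_close {s t : Set X} (hs : s.Nonempty) (ht : t.Nonempty) {r : ℝ}
    (h : hausdorffDist s t < r) : ∀ a ∈ s, ∃ b ∈ t, dist a b < r :=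
  fun a ha => exists_dist_lt_of_hausdorffDist_lt ha h (aux_ne_top hs ht)

variable [CompactSpace X] in
private lemma aux_diam_le {s t : Set X} {r : ℝ} (hr : 0 ≤ r)
    (H : ∀ a ∈ s, ∃ b ∈ t, dist a b < r) : diam s ≤ diam t + 2 * r := by
  have h0 : (0:ℝ) ≤ diam t + 2*r := by positivity
  refine diam_le_of_forall_dist_le h0 ?_
  intro a ha a' ha'
  obtain ⟨b, hb, hab⟩ := H a ha
  obtain ⟨b', hb', hab'⟩ := H a' ha'
  have h1 := dist_le_diam_of_mem (aux_bounded t) hb hb'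
  have h4 := dist_triangle4 a b b' a'
  have h5 : dist b' a' = dist a' b' := dist_comm _ _
  linarith

variable [CompactSpace X] in
/-- Uniformly continuous image map modulus for the Hausdorff distance. -/
private lemma aux_modulus (g : X → X) (hg : Continuous g) {η : ℝ} (hη : 0 < η) :
    ∃ θ > 0, ∀ s t : Set X, s.Nonempty → t.Nonempty → hausdorffDist s t < θ →
      hausdorffDist (g '' s) (g '' t) ≤ η := by
  obtain ⟨θ, hθ, hgd⟩ := Metric.uniformContinuous_iff.mp
    (CompactSpace.uniformContinuous_of_continuous hg) η hη
  refine ⟨θ, hθ, fun s t hs ht hst => ?_⟩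
  refine hausdorffDist_le_of_mem_dist hη.le ?_ ?_
  · rintro _ ⟨a, ha, rfl⟩
    obtain ⟨b, hb, hab⟩ := aux_close hs ht hst a ha
    exact ⟨g b, mem_image_of_mem g hb, (hgd hab).le⟩
  · rintro _ ⟨b, hb, rfl⟩
    obtain ⟨a, ha, hab⟩ := aux_close ht hs (by rwa [hausdorffDist_comm] at hst) b hb
    exact ⟨g a, mem_image_of_mem g ha, (hgd hab).le⟩

private lemma aux_Ws_self (g : X → X) {c : ℝ} (hc : 0 ≤ c) (z : X) : z ∈ Ws g c z := by
  intro k; simp [hc]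

private lemma aux_Ws_closed (g : X → X) (hg : Continuous g) (c : ℝ) (z : X) :
    IsClosed (Ws g c z) := by
  have : Ws g c z = ⋂ k : ℕ, {y | dist (g^[k] y) (g^[k] z) ≤ c} := by
    ext q; simp [Ws]
  rw [this]
  exact isClosed_iInter fun k =>
    isClosed_le ((hg.iterate k).dist continuous_const) continuous_const

private lemma aux_Ws_diam {g : X → X} {c : ℝ} (hc : 0 ≤ c) {z : X} {s : Set X}
    (h : s ⊆ Ws g c z) (k : ℕ) : diam (g^[k] '' s) ≤ 2 * c := by
  refine diam_le_of_forall_dist_le (by linarith) ?_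
  rintro _ ⟨a, ha, rfl⟩ _ ⟨b, hb, rfl⟩
  have h1 := h ha k
  have h2 := h hb k
  calc dist (g^[k] a) (g^[k] b) ≤ dist (g^[k] a) (g^[k] z) + dist (g^[k] z) (g^[k] b) :=
        dist_triangle _ _ _
  _ ≤ c + c := by rw [dist_comm (g^[k] z)] at *; linarith
  _ = 2 * c := by ring

variable [CompactSpace X] in
private lemma aux_comp_compact {F : Set X} (hF : IsClosed F) (x : X) :
    IsCompact (connectedComponentIn F x) := by
  by_cases hx : x ∈ F
  · rw [connectedComponentIn_eq_image hx]
    have : CompactSpace F := isCompact_iff_compactSpace.mp hF.isCompact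
    exact (isClosed_connectedComponent.isCompact).image continuous_subtype_val
  · rw [connectedComponentIn_eq_empty hx]; exact isCompact_empty

end Aux

/-- Clopen separation in compact Hausdorff spaces. -/
private lemma aux_exists_clopen {α : Type*} [TopologicalSpace α] [T2Space α] [CompactSpace α]
    (x : α) {U : Set α} (hU : IsOpen U) (h : connectedComponent x ⊆ U) :
    ∃ Z : Set α, IsClopen Z ∧ x ∈ Z ∧ Z ⊆ U := by
  have H1 := (hU.isClosed_compl.isCompact).inter_iInter_nonempty
    (fun s : { s : Set α // IsClopen s ∧ x ∈ s } => s) fun s => s.2.1.1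
  rw [← not_disjoint_iff_nonempty_inter, imp_not_comm, not_forall] at H1
  obtain ⟨si, H2⟩ := H1 (by
    rw [disjoint_compl_left_iff_subset, ← connectedComponent_eq_iInter_isClopen]
    exact h)
  refine ⟨⋂ Z ∈ si, Subtype.val Z, isClopen_biInter_finset fun s _ => s.2.1,
    mem_iInter₂.2 fun s _ => s.2.2, ?_⟩
  intro q hq
  by_contra hqU
  exact H2 ⟨q, hqU, hq⟩

section IterZ

private lemma aux_iterZ_natCast {α : Type*} (g g' : α → α) (k : ℕ) :
    iterZ g g' (k : ℤ) = g^[k] := rfl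

private lemma aux_iterZ_negSucc {α : Type*} (g g' : α → α) (k : ℕ) :
    iterZ g g' (Int.negSucc k) = g'^[k + 1] := rfl

private lemma aux_iterZ_succ {α : Type*} (F G : α → α) (hFG : ∀ a, F (G a) = a) (n : ℤ)
    (a : α) : iterZ F G (n + 1) a = F (iterZ F G n a) := by
  cases n with
  | ofNat k =>
      have h : (Int.ofNat k) + 1 = Int.ofNat (k + 1) := rfl
      rw [h]
      show F^[k+1] a = F (F^[k] a)
      rw [Function.iterate_succ_apply']
  | negSucc k =>
      cases k with
      | zero =>
          have h : Int.negSucc 0 + 1 = Int.ofNat 0 := by decide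
          rw [h]
          show a = F (G^[1] a)
          simp [hFG a]
      | succ j =>
          have h : Int.negSucc (j + 1) + 1 = Int.negSucc j := by
            rw [Int.negSucc_eq, Int.negSucc_eq]; push_cast; ring
          rw [h]
          show G^[j+1] a = F (G^[j+2] a)
          rw [show G^[j+2] a = G (G^[j+1] a) from Function.iterate_succ_apply' G (j+1) a]
          rw [hFG]

variable {X : Type*} [MetricSpace X]

private lemma aux_inducedC_coe (g : X → X) (hg : Continuous g) (A : Continua X) :
    ((inducedC g hg A).1 : Set X) = g '' (A.1 : Set X) := rfl

private lemma aux_inducedC_iterate_coe (g : X → X) (hg : Continuous g) (k : ℕ)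
    (A : Continua X) : (((inducedC g hg)^[k] A).1 : Set X) = g^[k] '' (A.1 : Set X) := by
  induction k with
  | zero => simp
  | succ j ih =>
      rw [Function.iterate_succ_apply', aux_inducedC_coe, ih, Function.iterate_succ',
        Set.image_comp]

private lemma aux_coe_iterZ (f : X ≃ₜ X) (n : ℤ) (A : Continua X) :
    ((iterZ (inducedC ⇑f f.continuous) (inducedC ⇑f.symm f.symm.continuous) n A).1 : Set X)
      = iterZ ⇑f ⇑f.symm n '' (A.1 : Set X) := by
  cases n with
  | ofNat k => exact aux_inducedC_iterate_coe _ _ k A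
  | negSucc k => exact aux_inducedC_iterate_coe _ _ (k + 1) A

/-- Monotonicity of the global stable family. -/
private lemma aux_fam_mono (g : X ≃ₜ X) {ε : ℝ} (hε : 0 ≤ ε) (p : X) (n : ℕ) :
    (⇑g.symm)^[n] '' connectedComponentIn (Ws ⇑g ε ((⇑g)^[n] p)) ((⇑g)^[n] p) ⊆
      (⇑g.symm)^[n + 1] '' connectedComponentIn (Ws ⇑g ε ((⇑g)^[n + 1] p)) ((⇑g)^[n + 1] p) := by
  have hsub : ⇑g '' connectedComponentIn (Ws ⇑g ε ((⇑g)^[n] p)) ((⇑g)^[n] p) ⊆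
      connectedComponentIn (Ws ⇑g ε ((⇑g)^[n + 1] p)) ((⇑g)^[n + 1] p) := by
    apply IsPreconnected.subset_connectedComponentIn
    · exact isPreconnected_connectedComponentIn.image _ g.continuous.continuousOn
    · rw [Function.iterate_succ_apply']
      exact mem_image_of_mem _ (mem_connectedComponentIn (aux_Ws_self _ hε _))
    · rintro _ ⟨a, ha, rfl⟩
      have haW := connectedComponentIn_subset _ _ ha
      intro k
      rw [Function.iterate_succ_apply' (⇑g) n p, ← Function.iterate_succ_apply (⇑g) k a,
        ← Function.iterate_succ_apply (⇑g) k ((⇑g)^[n] p)]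
      exact haW (k + 1)
  rintro _ ⟨a, ha, rfl⟩
  refine ⟨g a, hsub (mem_image_of_mem _ ha), ?_⟩
  rw [Function.iterate_succ_apply, Homeomorph.symm_apply_apply]

/-- From density of an increasing union, uniform approximation by a single member. -/
private lemma aux_dense_family [CompactSpace X] (S : ℕ → Set X)
    (hmono : ∀ n, S n ⊆ S (n + 1)) (hdense : Dense (⋃ n, S n)) {θ : ℝ} (hθ : 0 < θ) :
    ∃ n, ∀ p : X, ∃ q ∈ S n, dist p q < θ := by
  have hSm : Monotone S := monotone_nat_of_le_succ hmono
  obtain ⟨t, htf, hcover⟩ := Metric.totallyBounded_iff.mp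
    (isCompact_univ (X := X)).totallyBounded (θ / 2) (by positivity)
  have key : ∀ y : X, ∃ n, ∃ z, z ∈ S n ∧ dist y z < θ / 2 := by
    intro y
    obtain ⟨z, hz1, hz2⟩ := hdense.exists_mem_open isOpen_ball
      ⟨y, mem_ball_self (half_pos hθ)⟩
    obtain ⟨n, hn⟩ := mem_iUnion.mp hz1
    exact ⟨n, z, hn, by rw [dist_comm]; exact mem_ball.mp hz2⟩
  choose nn zz hzz hdzz using key
  refine ⟨htf.toFinset.sup nn, fun p => ?_⟩
  have hp := hcover (mem_univ p)
  rw [mem_iUnion₂] at hp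
  obtain ⟨c0, hct, hpc⟩ := hp
  refine ⟨zz c0, hSm (Finset.le_sup (htf.mem_toFinset.mpr hct)) (hzz c0), ?_⟩
  calc dist p (zz c0) ≤ dist p c0 + dist c0 (zz c0) := dist_triangle _ _ _
  _ < θ / 2 + θ / 2 := add_lt_add (mem_ball.mp hpc) (hdzz c0)
  _ = θ := by ring

end IterZ

/-- If `f` is a cw-expansive homeomorphism of a non-trivial compact metric space,
`c > 0` a cw-expansive constant, `ε ∈ (0, c/2)`, and there are points `x, y` whose
global stable/unstable continua `C^s(x)` and `C^u(y)` are dense in `X`, then the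
induced map `C(f)` does not have the shadowing property. -/
theorem stmt1 {X : Type*} [MetricSpace X] [CompactSpace X] [Nontrivial X] (f : X ≃ₜ X)
    (c : ℝ) (hc : 0 < c)
    (hcw : ∀ z : X, IsTotallyDisconnected (Ws ⇑f c z ∩ Ws ⇑f.symm c z))
    (ε : ℝ) (hε0 : 0 < ε) (hεc : ε < c / 2)
    (x y : X)
    (hxs : Dense (⋃ n : ℕ,
      (⇑f.symm)^[n] '' connectedComponentIn (Ws ⇑f ε ((⇑f)^[n] x)) ((⇑f)^[n] x)))
    (hyu : Dense (⋃ n : ℕ,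
      (⇑f)^[n] '' connectedComponentIn (Ws ⇑f.symm ε ((⇑f.symm)^[n] y)) ((⇑f.symm)^[n] y))) :
    ¬ ShadowingZ (inducedC ⇑f f.continuous) (inducedC ⇑f.symm f.symm.continuous) := by
  intro H
  set F := inducedC ⇑f f.continuous with hFdef
  set G := inducedC ⇑f.symm f.symm.continuous with hGdef
  have hFG : ∀ A : Continua X, F (G A) = A := by
    intro A
    apply Subtype.ext
    apply TopologicalSpace.NonemptyCompacts.ext
    show ⇑f '' (⇑f.symm '' (A.1 : Set X)) = (A.1 : Set X)
    rw [← Set.image_comp, Homeomorph.self_comp_symm, Set.image_id]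
  -- two distinct points
  obtain ⟨p₀, q₀, hpq⟩ := exists_pair_ne X
  set Δ := dist p₀ q₀ with hΔdef
  have hΔ : 0 < Δ := dist_pos.mpr hpq
  -- choice of ε₀ and shadowing constant
  set ε₀ := min ((c - 2 * ε) / 2) (Δ / 8) with hε₀def
  have hε₀ : 0 < ε₀ := lt_min (by linarith) (by linarith)
  have hε₀c : 2 * ε + 2 * ε₀ ≤ c := by
    have := min_le_left ((c - 2 * ε) / 2) (Δ / 8); linarith
  have hε₀Δ : ε₀ ≤ Δ / 8 := min_le_right _ _
  obtain ⟨δ₀, hδ₀, Hsh⟩ := H ε₀ hε₀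
  obtain ⟨θf, hθf, hmod⟩ := aux_modulus (X := X) ⇑f f.continuous (η := δ₀ / 4) (by linarith)
  -- the stable and unstable families
  set Sfam : ℕ → Set X := fun n =>
    (⇑f.symm)^[n] '' connectedComponentIn (Ws ⇑f ε ((⇑f)^[n] x)) ((⇑f)^[n] x) with hSfam
  set Ufam : ℕ → Set X := fun n =>
    (⇑f)^[n] '' connectedComponentIn (Ws ⇑f.symm ε ((⇑f.symm)^[n] y)) ((⇑f.symm)^[n] y)
    with hUfam
  have hSmono : ∀ n, Sfam n ⊆ Sfam (n + 1) := fun n => aux_fam_mono f hε0.le x n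
  have hUmono : ∀ n, Ufam n ⊆ Ufam (n + 1) := by
    intro n
    have h := aux_fam_mono f.symm hε0.le y n
    simpa only [Homeomorph.symm_symm] using h
  obtain ⟨m, hm⟩ := aux_dense_family Ufam hUmono hyu (θ := min θf ε₀ / 2)
    (by positivity)
  obtain ⟨m', hm'⟩ := aux_dense_family Sfam hSmono hxs (θ := δ₀ / 8) (by linarith)
  -- Hausdorff estimates for the chosen members
  have hUne : (Ufam m).Nonempty := (hm p₀).imp fun q hq => hq.1
  have hSne : (Sfam m').Nonempty := (hm' p₀).imp fun q hq => hq.1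
  have huniv_ne : (univ : Set X).Nonempty := ⟨p₀, mem_univ _⟩
  have hUuniv : hausdorffDist (Ufam m) univ < min θf ε₀ := by
    have hr0 : (0:ℝ) ≤ min θf ε₀ / 2 := by positivity
    have h1 : hausdorffDist (Ufam m) univ ≤ min θf ε₀ / 2 := by
      refine hausdorffDist_le_of_mem_dist hr0 ?_ ?_
      · intro z _; exact ⟨z, mem_univ z, by simpa using hr0⟩
      · intro p _
        obtain ⟨q, hq, hd⟩ := hm p
        exact ⟨q, hq, hd.le⟩
    have h2 : (0:ℝ) < min θf ε₀ := lt_min hθf hε₀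
    linarith
  have hSuniv : hausdorffDist univ (Sfam m') ≤ δ₀ / 4 := by
    rw [hausdorffDist_comm]
    refine hausdorffDist_le_of_mem_dist (by linarith) ?_ ?_
    · intro z _; refine ⟨z, mem_univ z, ?_⟩
      rw [dist_self]; linarith
    · intro p _
      obtain ⟨q, hq, hd⟩ := hm' p
      exact ⟨q, hq, by linarith [hd]⟩
  -- the base continua
  set zu := (⇑f.symm)^[m] y with hzu
  set Cu := connectedComponentIn (Ws ⇑f.symm ε zu) zu with hCu
  have hCu_conn : IsConnected Cu :=
    isConnected_connectedComponentIn_iff.mpr (aux_Ws_self _ hε0.le _)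
  have hCu_comp : IsCompact Cu :=
    aux_comp_compact (aux_Ws_closed _ f.symm.continuous _ _) _
  have hCu_sub : Cu ⊆ Ws ⇑f.symm ε zu := connectedComponentIn_subset _ _
  set CuC : Continua X := ⟨⟨⟨Cu, hCu_comp⟩, hCu_conn.nonempty⟩, hCu_conn⟩ with hCuC
  set zs := (⇑f)^[m'] x with hzs
  set Cs := connectedComponentIn (Ws ⇑f ε zs) zs with hCs
  have hCs_conn : IsConnected Cs :=
    isConnected_connectedComponentIn_iff.mpr (aux_Ws_self _ hε0.le _)
  have hCs_comp : IsCompact Cs :=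
    aux_comp_compact (aux_Ws_closed _ f.continuous _ _) _
  have hCs_sub : Cs ⊆ Ws ⇑f ε zs := connectedComponentIn_subset _ _
  set CsC : Continua X := ⟨⟨⟨Cs, hCs_comp⟩, hCs_conn.nonempty⟩, hCs_conn⟩ with hCsC
  have hUcar : Ufam m = (⇑f)^[m] '' Cu := rfl
  have hScar : Sfam m' = (⇑f.symm)^[m'] '' Cs := rfl
  -- the pseudo-orbit
  set A : ℤ → Continua X := fun n =>
    if n ≤ 0 then iterZ F G (n + m) CuC else iterZ F G (n - 1 - m') CsC with hA
  -- carrier of A at relevant places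
  have hcarA0 : ((A 0).1 : Set X) = Ufam m := by
    rw [hA]
    simp only [le_refl, if_pos, zero_add]
    rw [aux_coe_iterZ]
    exact rfl
  have hcarA1 : ((A 1).1 : Set X) = Sfam m' := by
    have h0 : ¬ (1:ℤ) ≤ 0 := by omega
    rw [hA]
    simp only [if_neg h0]
    rw [aux_coe_iterZ]
    have h1 : (1 - 1 - (m' : ℤ)) = -(m' : ℤ) := by ring
    rw [h1]
    cases m'' : m' with
    | zero => subst m''; exact rfl
    | succ j =>
        subst m''
        have h2 : (-(((j:ℕ)+1 : ℕ) : ℤ)) = Int.negSucc j := by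
          rw [Int.negSucc_eq]; push_cast; ring
        rw [h2]
        exact rfl
  -- pseudo-orbit property
  have hpseudo : ∀ n : ℤ, dist (F (A n)) (A (n + 1)) < δ₀ := by
    intro n
    rcases lt_trichotomy n 0 with hn | hn | hn
    · have h1 : n ≤ 0 := le_of_lt hn
      have h2 : n + 1 ≤ 0 := by omega
      rw [hA]
      simp only [if_pos h1, if_pos h2]
      rw [← aux_iterZ_succ F G hFG (n + m) CuC]
      have h3 : n + 1 + (m:ℤ) = n + m + 1 := by ring
      rw [h3, dist_self]
      exact hδ₀
    · subst hn
      have e1 : ((F (A 0)).1 : Set X) = ⇑f '' Ufam m := by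
        rw [hFdef, aux_inducedC_coe, hcarA0]
      have hd : dist (F (A 0)) (A (0 + 1)) =
          hausdorffDist (⇑f '' Ufam m) (Sfam m') := by
        rw [Subtype.dist_eq, Metric.NonemptyCompacts.dist_eq]
        norm_num
        rw [e1, hcarA1]
      rw [hd]
      have t1 : hausdorffDist (⇑f '' Ufam m) (univ : Set X) ≤ δ₀ / 4 := by
        have h := hmod (Ufam m) univ hUne huniv_ne
          (lt_of_lt_of_le hUuniv (min_le_left _ _))
        rwa [Set.image_univ, f.surjective.range_eq] at h
      have hfUne : (⇑f '' Ufam m).Nonempty := hUne.image _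
      calc hausdorffDist (⇑f '' Ufam m) (Sfam m')
          ≤ hausdorffDist (⇑f '' Ufam m) univ + hausdorffDist univ (Sfam m') :=
            hausdorffDist_triangle (aux_ne_top hfUne huniv_ne)
      _ ≤ δ₀ / 4 + δ₀ / 4 := add_le_add t1 hSuniv
      _ < δ₀ := by linarith
    · have h1 : ¬ n ≤ 0 := by omega
      have h2 : ¬ n + 1 ≤ 0 := by omega
      rw [hA]
      simp only [if_neg h1, if_neg h2]
      rw [← aux_iterZ_succ F G hFG (n - 1 - m') CsC]
      have h3 : n + 1 - 1 - (m':ℤ) = n - 1 - m' + 1 := by ring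
      rw [h3, dist_self]
      exact hδ₀
  obtain ⟨Bc, hB⟩ := Hsh A hpseudo
  set Bs := (Bc.1 : Set X) with hBs
  have hBne : Bs.Nonempty := Bc.1.nonempty
  have hBcomp : IsCompact Bs := Bc.1.isCompact
  have hBconn : IsConnected Bs := Bc.2
  -- distance at time 0
  have hB0 : hausdorffDist Bs (Ufam m) < ε₀ := by
    have h := hB 0
    have h0 : iterZ F G 0 Bc = Bc := rfl
    rw [h0, Subtype.dist_eq, Metric.NonemptyCompacts.dist_eq, hcarA0] at h
    exact h
  -- B is large
  have hdiamB : Δ / 2 ≤ diam Bs := by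
    have hUuniv' : hausdorffDist univ (Ufam m) < ε₀ := by
      rw [hausdorffDist_comm]
      exact lt_of_lt_of_le hUuniv (min_le_right _ _)
    obtain ⟨u1, hu1, hpu1⟩ := aux_close huniv_ne hUne hUuniv' p₀ (mem_univ _)
    obtain ⟨u2, hu2, hpu2⟩ := aux_close huniv_ne hUne hUuniv' q₀ (mem_univ _)
    have hB0' : hausdorffDist (Ufam m) Bs < ε₀ := by rwa [hausdorffDist_comm] at hB0
    obtain ⟨b1, hb1, hub1⟩ := aux_close hUne hBne hB0' u1 hu1
    obtain ⟨b2, hb2, hub2⟩ := aux_close hUne hBne hB0' u2 hu2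
    have h4 := dist_triangle4 p₀ b1 b2 q₀
    have hbb := dist_le_diam_of_mem (aux_bounded Bs) hb1 hb2
    have t1 : dist p₀ b1 ≤ dist p₀ u1 + dist u1 b1 := dist_triangle _ _ _
    have t2 : dist b2 q₀ ≤ dist b2 u2 + dist u2 q₀ := dist_triangle _ _ _
    have t3 : dist b2 u2 = dist u2 b2 := dist_comm _ _
    have t4 : dist u2 q₀ = dist q₀ u2 := dist_comm _ _
    have hΔ8 : ε₀ ≤ Δ / 8 := hε₀Δ
    linarith
  -- forward tail
  have hTailF : ∀ k : ℕ, m' + 1 ≤ k → diam ((⇑f)^[k] '' Bs) ≤ 2 * ε + 2 * ε₀ := by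
    intro k hk
    have h := hB (k : ℤ)
    have h1 : ¬ ((k:ℤ) ≤ 0) := by omega
    rw [Subtype.dist_eq, Metric.NonemptyCompacts.dist_eq] at h
    have hAk : ((A (k:ℤ)).1 : Set X) = iterZ ⇑f ⇑f.symm ((k:ℤ) - 1 - m') '' Cs := by
      rw [hA]; simp only [if_neg h1]; rw [aux_coe_iterZ]; rfl
    have hYk : ((iterZ F G (k:ℤ) Bc).1 : Set X) = (⇑f)^[k] '' Bs := by
      rw [aux_coe_iterZ]; rfl
    rw [hYk, hAk] at h
    obtain ⟨j, hj⟩ : ∃ j : ℕ, ((k:ℤ) - 1 - m') = (j : ℤ) := ⟨k - 1 - m', by omega⟩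
    rw [hj, aux_iterZ_natCast] at h
    have hdiam : diam ((⇑f)^[j] '' Cs) ≤ 2 * ε := aux_Ws_diam hε0.le hCs_sub j
    have h2 := aux_diam_le hε₀.le (aux_close (hBne.image _) ((hCs_conn.nonempty).image _) h)
    linarith
  -- backward tail
  have hTailB : ∀ j : ℕ, m ≤ j → diam ((⇑f.symm)^[j + 1] '' Bs) ≤ 2 * ε + 2 * ε₀ := by
    intro j hj
    have h := hB (Int.negSucc j)
    have h1 : Int.negSucc j ≤ 0 := by rw [Int.negSucc_eq]; omega
    rw [Subtype.dist_eq, Metric.NonemptyCompacts.dist_eq] at h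
    have hAk : ((A (Int.negSucc j)).1 : Set X)
        = iterZ ⇑f ⇑f.symm (Int.negSucc j + m) '' Cu := by
      rw [hA]; simp only [if_pos h1]; rw [aux_coe_iterZ]; rfl
    have hYk : ((iterZ F G (Int.negSucc j) Bc).1 : Set X) = (⇑f.symm)^[j + 1] '' Bs := by
      rw [aux_coe_iterZ]; rfl
    rw [hYk, hAk] at h
    obtain ⟨i, hi⟩ : ∃ i : ℕ, Int.negSucc j + (m:ℤ) = Int.negSucc i :=
      ⟨j - m, by rw [Int.negSucc_eq, Int.negSucc_eq]; omega⟩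
    rw [hi, aux_iterZ_negSucc] at h
    have hdiam : diam ((⇑f.symm)^[i + 1] '' Cu) ≤ 2 * ε := aux_Ws_diam hε0.le hCu_sub (i + 1)
    have h2 := aux_diam_le hε₀.le (aux_close (hBne.image _) ((hCu_conn.nonempty).image _) h)
    linarith
  -- the final argument
  obtain ⟨b₀, hb₀B⟩ := hBne
  set N := max (m' + 1) (m + 1) with hN
  set ρ := min c (Δ / 8) with hρ
  have hρpos : 0 < ρ := lt_min hc (by linarith)
  have hρc : ρ ≤ c := min_le_left _ _
  have hρΔ : ρ ≤ Δ / 8 := min_le_right _ _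
  set E₀ : Set X := {q | ∀ k ≤ N, dist ((⇑f)^[k] q) ((⇑f)^[k] b₀) ≤ ρ ∧
    dist ((⇑f.symm)^[k] q) ((⇑f.symm)^[k] b₀) ≤ ρ} with hE₀
  set O : Set X := {q | ∀ k ≤ N, dist ((⇑f)^[k] q) ((⇑f)^[k] b₀) < ρ ∧
    dist ((⇑f.symm)^[k] q) ((⇑f.symm)^[k] b₀) < ρ} with hO
  have hE₀closed : IsClosed E₀ := by
    have he : E₀ = ⋂ k, ⋂ (_ : k ≤ N),
        ({q | dist ((⇑f)^[k] q) ((⇑f)^[k] b₀) ≤ ρ} ∩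
         {q | dist ((⇑f.symm)^[k] q) ((⇑f.symm)^[k] b₀) ≤ ρ}) := by
      ext q
      simp only [hE₀, mem_setOf_eq, mem_iInter, mem_inter_iff]
    rw [he]
    exact isClosed_iInter fun k => isClosed_iInter fun _ =>
      ((isClosed_le ((f.continuous.iterate k).dist continuous_const) continuous_const).inter
       (isClosed_le ((f.symm.continuous.iterate k).dist continuous_const) continuous_const))
  have hOopen : IsOpen O := by
    have ho : O = ⋂ k ∈ Finset.range (N + 1),
        ({q | dist ((⇑f)^[k] q) ((⇑f)^[k] b₀) < ρ} ∩
         {q | dist ((⇑f.symm)^[k] q) ((⇑f.symm)^[k] b₀) < ρ}) := by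
      ext q
      simp only [hO, mem_setOf_eq, mem_iInter, mem_inter_iff, Finset.mem_range,
        Nat.lt_succ_iff]
    rw [ho]
    exact isOpen_biInter_finset fun k _ =>
      ((isOpen_lt ((f.continuous.iterate k).dist continuous_const) continuous_const).inter
       (isOpen_lt ((f.symm.continuous.iterate k).dist continuous_const) continuous_const))
  have hb₀E : b₀ ∈ E₀ ∩ Bs := by
    refine ⟨fun k _ => ⟨?_, ?_⟩, hb₀B⟩ <;> rw [dist_self] <;> exact hρpos.le
  have hb₀O : b₀ ∈ O := fun k _ => by constructor <;> rw [dist_self] <;> exact hρpos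
  have hOE : O ∩ Bs ⊆ E₀ ∩ Bs := fun q hq =>
    ⟨fun k hk => ⟨(hq.1 k hk).1.le, (hq.1 k hk).2.le⟩, hq.2⟩
  -- the component is inside a dynamical ball
  have hsub1 : connectedComponentIn (E₀ ∩ Bs) b₀ ⊆ Ws ⇑f c b₀ ∩ Ws ⇑f.symm c b₀ := by
    intro q hq
    obtain ⟨hqE₀, hqB⟩ := connectedComponentIn_subset _ _ hq
    constructor
    · intro k
      by_cases hk : k ≤ N
      · exact le_trans (hqE₀ k hk).1 hρc
      · push_neg at hk
        have hN1 : m' + 1 ≤ N := le_max_left _ _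
        have hk' : m' + 1 ≤ k := by omega
        have hd := hTailF k hk'
        have hdd := dist_le_diam_of_mem (aux_bounded ((⇑f)^[k] '' Bs))
          (mem_image_of_mem _ hqB) (mem_image_of_mem _ hb₀B)
        linarith
    · intro k
      by_cases hk : k ≤ N
      · exact le_trans (hqE₀ k hk).2 hρc
      · push_neg at hk
        have hN1 : m + 1 ≤ N := le_max_right _ _
        obtain ⟨j, rfl⟩ : ∃ j, k = j + 1 := ⟨k - 1, by omega⟩
        have hj : m ≤ j := by omega
        have hd := hTailB j hj
        have hdd := dist_le_diam_of_mem (aux_bounded ((⇑f.symm)^[j + 1] '' Bs))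
          (mem_image_of_mem _ hqB) (mem_image_of_mem _ hb₀B)
        linarith
  have hsubs : (connectedComponentIn (E₀ ∩ Bs) b₀).Subsingleton :=
    hcw b₀ _ hsub1 isPreconnected_connectedComponentIn
  have hccb : connectedComponentIn (E₀ ∩ Bs) b₀ ⊆ {b₀} := fun q hq => by
    rw [mem_singleton_iff]
    exact hsubs hq (mem_connectedComponentIn hb₀E)
  -- clopen separation
  set E := E₀ ∩ Bs with hE
  have hEcomp : IsCompact E := hBcomp.inter_left hE₀closed
  haveI : CompactSpace E := isCompact_iff_compactSpace.mp hEcomp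
  set x₀ : E := ⟨b₀, hb₀E⟩ with hx₀
  have hccO : connectedComponent x₀ ⊆ (Subtype.val ⁻¹' O : Set E) := by
    intro q hq
    have hmem : (q : X) ∈ connectedComponentIn E b₀ := by
      rw [connectedComponentIn_eq_image hb₀E]
      exact mem_image_of_mem _ hq
    have hqb : (q : X) = b₀ := by
      have h := hccb hmem
      rwa [mem_singleton_iff] at h
    show (q : X) ∈ O
    rw [hqb]; exact hb₀O
  obtain ⟨Z, hZclopen, hxZ, hZO⟩ := aux_exists_clopen x₀
    (hOopen.preimage continuous_subtype_val) hccO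
  obtain ⟨W, hWopen, hWZ⟩ := isOpen_induced_iff.mp hZclopen.isOpen
  set T : Set X := Subtype.val '' Z with hT
  have hTE : T = E ∩ W := by rw [hT, ← hWZ, Subtype.image_preimage_coe]
  have hTO : T ⊆ O := by rintro _ ⟨z, hz, rfl⟩; exact hZO hz
  have hTclosed : IsClosed T :=
    ((hZclopen.isClosed.isCompact).image continuous_subtype_val).isClosed
  have hTeq : T = Bs ∩ (W ∩ O) := by
    apply Subset.antisymm
    · intro q hq
      have hqO := hTO hq
      rw [hTE] at hq
      exact ⟨hq.1.2, hq.2, hqO⟩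
    · rintro q ⟨hqB, hqW, hqO⟩
      rw [hTE]
      exact ⟨hOE ⟨hqO, hqB⟩, hqW⟩
  haveI : PreconnectedSpace Bs := Subtype.preconnectedSpace hBconn.isPreconnected
  set Zb : Set Bs := Subtype.val ⁻¹' T with hZb
  have hZbclopen : IsClopen Zb := by
    constructor
    · exact hTclosed.preimage continuous_subtype_val
    · have hzb2 : Zb = Subtype.val ⁻¹' (W ∩ O) := by
        ext q
        simp only [hZb, mem_preimage, hTeq, mem_inter_iff]
        exact ⟨fun h => h.2, fun h => ⟨q.2, h⟩⟩
      rw [hzb2]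
      exact (hWopen.inter hOopen).preimage continuous_subtype_val
  have hZbne : Zb.Nonempty := ⟨⟨b₀, hb₀B⟩, by
    show b₀ ∈ T
    exact ⟨x₀, hxZ, rfl⟩⟩
  have hall := hZbclopen.eq_univ hZbne
  have hBO : ∀ q, q ∈ Bs → dist q b₀ < ρ := by
    intro q hq
    have h1 : (⟨q, hq⟩ : Bs) ∈ Zb := by rw [hall]; exact mem_univ _
    have hqT : q ∈ T := h1
    have hqO := hTO hqT
    have h2 := (hqO 0 (Nat.zero_le _)).1
    simpa using h2
  have hdiam_small : diam Bs ≤ 2 * ρ := by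
    refine diam_le_of_forall_dist_le (by positivity) ?_
    intro q hq q' hq'
    have h1 := hBO q hq
    have h2 := hBO q' hq'
    calc dist q q' ≤ dist q b₀ + dist q' b₀ := dist_triangle_right _ _ _
    _ ≤ 2 * ρ := by linarith
  linarith
end

section
/- If (X,f) is a simple dynamical system, where f is a homeomorphism of a compact metric space X, then f has the shadowing property. -/
open Set Metric Filter Function

/-!
Fix small trapping regions `V ∋ p` for `f` and `W ∋ q` for `f⁻¹`. A pseudo-orbit that enters `V`
never leaves it, one that enters `W` never leaves it backward, and by compactness every point
outside `f⁻¹ W` reaches `V` within a uniform time `M`. So a pseudo-orbit either stays near `p` or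
near `q` forever, or it has a time `t` with `x (t - 1) ∈ f⁻¹ W` and `f^M (x t) ∈ V`; then the true
orbit through `x t` follows the pseudo-orbit backward inside `W`, and forward for `M + 1` steps by
uniform continuity and afterwards inside `V`.
-/

section Shadowing

variable {X : Type*}

theorem iterZ_eq_zpow (e : Equiv.Perm X) (n : ℤ) : iterZ ⇑e ⇑e.symm n = ⇑(e ^ n) := by
  cases n with
  | ofNat n => exact (Equiv.Perm.coe_pow e n).symm
  | negSucc n => rw [zpow_negSucc, ← inv_pow, Equiv.Perm.coe_pow]; rfl

theorem iterZ_fixed {g ginv : X → X} {c : X} (hg : g c = c) (hginv : ginv c = c) (n : ℤ) :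
    iterZ g ginv n c = c := by
  cases n with
  | ofNat n => exact iterate_fixed hg n
  | negSucc n => exact iterate_fixed hginv (n + 1)

theorem IsCompact.exists_forall_iterate_mem [TopologicalSpace X] {g : X → X} {K V : Set X}
    (hK : IsCompact K) (hg : Continuous g) (hV : IsOpen V) (hgV : MapsTo g V V)
    (h : ∀ x ∈ K, ∃ n, g^[n] x ∈ V) : ∃ M, ∀ x ∈ K, g^[M] x ∈ V := by
  have hmono : Monotone fun n => g^[n] ⁻¹' V := fun n m hnm x hx => by
    rw [mem_preimage, ← Nat.sub_add_cancel hnm, iterate_add_apply]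
    exact hgV.iterate _ hx
  exact hK.elim_directed_cover _ (fun n => hV.preimage (hg.iterate n))
    (fun x hx => mem_iUnion.2 (h x hx)) hmono.directed_le

variable [MetricSpace X]

theorem exists_pos_forall_dist_lt_mem [CompactSpace X] {s U : Set X} (hU : IsOpen U)
    (hsU : closure s ⊆ U) : ∃ r > 0, ∀ a ∈ s, ∀ b, dist a b < r → b ∈ U := by
  obtain ⟨r, hr, hrU⟩ := isClosed_closure.isCompact.exists_thickening_subset_open hU hsU
  refine ⟨r, hr, fun a ha b hab => hrU (mem_thickening_iff.2 ⟨a, subset_closure ha, ?_⟩)⟩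
  rwa [dist_comm]

theorem dist_lt_of_subset_ball {s : Set X} {c : X} {ε : ℝ} (hs : s ⊆ ball c (ε / 2)) :
    ∀ a ∈ s, ∀ b ∈ s, dist a b < ε := fun a ha b hb =>
  calc dist a b ≤ dist a c + dist b c := dist_triangle_right a b c
    _ < ε / 2 + ε / 2 := add_lt_add (hs ha) (hs hb)
    _ = ε := add_halves ε

theorem dist_iterate_lt_of_mapsTo {g : X → X} {V : Set X} {ε : ℝ} (hgV : MapsTo g V V)
    (hVε : ∀ a ∈ V, ∀ b ∈ V, dist a b < ε) {y : X} {z : ℕ → X} {N : ℕ} (hy : g^[N] y ∈ V)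
    (hz : ∀ k ≥ N, z k ∈ V) (hyz : ∀ k < N, dist (g^[k] y) (z k) < ε) (k : ℕ) :
    dist (g^[k] y) (z k) < ε := by
  rcases lt_or_ge k N with hk | hk
  · exact hyz k hk
  · refine hVε _ ?_ _ (hz k hk)
    rw [← Nat.sub_add_cancel hk, iterate_add_apply]
    exact hgV.iterate _ hy

def IsPseudoOrbit (g : X → X) (δ : ℝ) (x : ℤ → X) : Prop :=
  ∀ n, dist (g (x n)) (x (n + 1)) < δ

theorem IsPseudoOrbit.mono {g : X → X} {δ δ' : ℝ} {x : ℤ → X} (hx : IsPseudoOrbit g δ x)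
    (h : δ ≤ δ') : IsPseudoOrbit g δ' x := fun n => (hx n).trans_le h

theorem UniformContinuous.exists_isPseudoOrbit_dist_iterate_lt {g : X → X}
    (hg : UniformContinuous g) (T : ℕ) {η : ℝ} (hη : 0 < η) :
    ∃ δ > 0, ∀ x, IsPseudoOrbit g δ x → ∀ t, ∀ k ≤ T, dist (g^[k] (x t)) (x (t + k)) < η := by
  induction T generalizing η with
  | zero => exact ⟨η, hη, fun x _ t k hk => by simpa [Nat.le_zero.1 hk] using hη⟩
  | succ T ih =>
    obtain ⟨γ, hγ, hgγ⟩ := Metric.uniformContinuous_iff.1 hg (η / 2) (half_pos hη)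
    obtain ⟨δ, hδ, hδT⟩ := ih (lt_min hγ hη)
    refine ⟨min δ (η / 2), lt_min hδ (half_pos hη), fun x hx t k hk => ?_⟩
    have hxδ := hx.mono (min_le_left _ _)
    rcases Nat.lt_or_ge k (T + 1) with hkT | hkT
    · exact (hδT x hxδ t k (Nat.lt_succ_iff.1 hkT)).trans_le (min_le_right _ _)
    obtain rfl : k = T + 1 := le_antisymm hk hkT
    have hT := (hδT x hxδ t T le_rfl).trans_le (min_le_left _ _)
    calc dist (g^[T + 1] (x t)) (x (t + ↑(T + 1)))
        ≤ dist (g (g^[T] (x t))) (g (x (t + T))) + dist (g (x (t + T))) (x (t + T + 1)) := by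
          rw [iterate_succ_apply', Nat.cast_succ, ← add_assoc]; exact dist_triangle _ _ _
      _ < η / 2 + η / 2 := add_lt_add (hgγ hT) ((hx (t + T)).trans_le (min_le_right _ _))
      _ = η := add_halves η

theorem exists_isPseudoOrbit_forward_shadow [CompactSpace X] {g : X → X} (hg : Continuous g)
    {V : Set X} (hV : IsOpen V) (hgV : closure (g '' V) ⊆ V) {ε : ℝ} (hε : 0 < ε)
    (hVε : ∀ a ∈ V, ∀ b ∈ V, dist a b < ε) (M : ℕ) :
    ∃ δ > 0, ∀ x, IsPseudoOrbit g δ x → ∀ t, g^[M] (x t) ∈ V →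
      (∀ n, t + M < n → x n ∈ V) ∧ ∀ k : ℕ, dist (g^[k] (x t)) (x (t + k)) < ε := by
  obtain ⟨r, hr, htrap⟩ := exists_pos_forall_dist_lt_mem hV hgV
  obtain ⟨δ, hδ, htrack⟩ := (CompactSpace.uniformContinuous_of_continuous hg
    ).exists_isPseudoOrbit_dist_iterate_lt (M + 1) (lt_min hr hε)
  refine ⟨min δ r, lt_min hδ hr, fun x hx t ht => ?_⟩
  have htrack := htrack x (hx.mono (min_le_left _ _)) t
  have hstep : ∀ n, x n ∈ V → x (n + 1) ∈ V := fun n hn =>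
    htrap _ (mem_image_of_mem g hn) _ ((hx n).trans_le (min_le_right _ _))
  have hgM : g^[M + 1] (x t) ∈ g '' V := by
    rw [iterate_succ_apply']; exact mem_image_of_mem g ht
  have hxM : x (t + ↑(M + 1)) ∈ V :=
    htrap _ hgM _ ((htrack (M + 1) le_rfl).trans_le (min_le_left _ _))
  have hlater : ∀ n, t + M < n → x n ∈ V := fun n hn =>
    Int.leInduction (motive := fun n _ => x n ∈ V) hxM (fun n _ => hstep n) n (by push_cast; omega)
  refine ⟨hlater, dist_iterate_lt_of_mapsTo (mapsTo_iff_image_subset.2 (subset_closure.trans hgV))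
    hVε (subset_closure.trans hgV hgM) (fun k hk => hlater _ (by omega)) fun k hk => ?_⟩
  exact (htrack k hk.le).trans_le (min_le_right _ _)

theorem exists_isPseudoOrbit_backward_shadow [CompactSpace X] (f : X ≃ₜ X) {W : Set X}
    (hW : IsOpen W) (hfW : closure (f.symm '' W) ⊆ W) {ε : ℝ} (hε : 0 < ε)
    (hWε : ∀ a ∈ W, ∀ b ∈ W, dist a b < ε) :
    ∃ δ > 0, ∀ x, IsPseudoOrbit f δ x → (∀ m n, m ≤ n → x n ∈ W → x m ∈ W) ∧
      ∀ t, x (t - 1) ∈ f.symm '' W → ∀ k : ℕ, dist (f.symm^[k] (x t)) (x (t - k)) < ε := by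
  obtain ⟨r, hr, htrap⟩ := exists_pos_forall_dist_lt_mem hW hfW
  obtain ⟨δ, hδ, hδr⟩ := Metric.uniformContinuous_iff.1
    (CompactSpace.uniformContinuous_of_continuous f.symm.continuous) r hr
  refine ⟨δ, hδ, fun x hx => ?_⟩
  have hback : ∀ n, dist (x n) (f.symm (x (n + 1))) < r := fun n => by
    simpa using hδr (hx n)
  have hdown : ∀ m n, m ≤ n → x n ∈ W → x m ∈ W := fun m n hmn hn =>
    Int.leInductionDown (motive := fun m _ => x m ∈ W) hn (fun m _ hm => htrap _ ⟨_, hm, rfl⟩ _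
      (by rw [dist_comm]; simpa using hback (m - 1))) m hmn
  refine ⟨hdown, fun t ht => dist_iterate_lt_of_mapsTo (N := 1)
    (mapsTo_iff_image_subset.2 (subset_closure.trans hfW)) hWε ?_ ?_ ?_⟩
  · simpa using htrap _ ht _ (by simpa using hback (t - 1))
  · exact fun k hk => hdown _ (t - 1) (by omega) (subset_closure.trans hfW ht)
  · intro k hk
    simpa [Nat.lt_one_iff.1 hk] using hε

theorem exists_shadow_of_forward_of_backward (f : X ≃ₜ X) {x : ℤ → X} {ε : ℝ} (t : ℤ)
    (hF : ∀ k : ℕ, dist (f^[k] (x t)) (x (t + k)) < ε)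
    (hB : ∀ k : ℕ, dist (f.symm^[k] (x t)) (x (t - k)) < ε) :
    ∃ y, ∀ n, dist (iterZ f f.symm n y) (x n) < ε := by
  refine ⟨(f.toEquiv ^ (-t)) (x t), fun n => ?_⟩
  have hn : iterZ f f.symm n = ⇑(f.toEquiv ^ n) := iterZ_eq_zpow f.toEquiv n
  rw [hn, ← Equiv.Perm.mul_apply, ← zpow_add]
  obtain ⟨k, hk | hk⟩ := Int.eq_nat_or_neg (n + -t)
  · rw [hk, zpow_natCast, Equiv.Perm.coe_pow, show n = t + k by omega]
    exact hF k
  · rw [hk, zpow_neg, zpow_natCast, ← inv_pow, Equiv.Perm.coe_pow, show n = t - k by omega]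
    exact hB k

theorem exists_shadow_of_trapping_regions [CompactSpace X] (f : X ≃ₜ X) {p q : X}
    (hp : f p = p) (hq : f q = q) {V W : Set X} (hV : IsOpen V) (hW : IsOpen W) (hpV : p ∈ V)
    (hqW : q ∈ W) (hfV : closure (f '' V) ⊆ V) (hfW : closure (f.symm '' W) ⊆ W) {ε : ℝ}
    (hε : 0 < ε) (hVε : ∀ a ∈ V, ∀ b ∈ V, dist a b < ε) (hWε : ∀ a ∈ W, ∀ b ∈ W, dist a b < ε)
    {M : ℕ} (hM : ∀ z ∉ f.symm '' W, f^[M] z ∈ V) :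
    ∃ δ > 0, ∀ x, IsPseudoOrbit f δ x → ∃ y, ∀ n, dist (iterZ f f.symm n y) (x n) < ε := by
  obtain ⟨δ₁, hδ₁, hfwd⟩ := exists_isPseudoOrbit_forward_shadow f.continuous hV hfV hε hVε M
  obtain ⟨δ₂, hδ₂, hbwd⟩ := exists_isPseudoOrbit_backward_shadow f hW hfW hε hWε
  refine ⟨min δ₁ δ₂, lt_min hδ₁ hδ₂, fun x hx => ?_⟩
  have hfwd := hfwd x (hx.mono (min_le_left _ _))
  obtain ⟨hdown, hbwd⟩ := hbwd x (hx.mono (min_le_right _ _))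
  by_cases htrans : ∃ t, x (t - 1) ∈ f.symm '' W ∧ f^[M] (x t) ∈ V
  · obtain ⟨t, htW, htV⟩ := htrans
    exact exists_shadow_of_forward_of_backward f t (hfwd t htV).2 (hbwd t htW)
  push Not at htrans
  by_cases hxW : ∃ n₀, x n₀ ∈ f.symm '' W
  · obtain ⟨n₀, hn₀⟩ := hxW
    have hup : ∀ n, x n ∈ f.symm '' W → x (n + 1) ∈ f.symm '' W := fun n hn => by
      by_contra h
      exact htrans (n + 1) (by simpa using hn) (hM _ h)
    have hmem : ∀ n, x n ∈ W := fun n => by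
      rcases le_total n n₀ with h | h
      · exact hdown n n₀ h (subset_closure.trans hfW hn₀)
      · exact subset_closure.trans hfW
          (Int.leInduction (motive := fun n _ => x n ∈ f.symm '' W) hn₀ (fun n _ => hup n) n h)
    exact ⟨q, fun n => by
      rw [iterZ_fixed hq (f.symm_apply_eq.2 hq.symm)]; exact hWε _ hqW _ (hmem n)⟩
  push Not at hxW
  refine ⟨p, fun n => ?_⟩
  rw [iterZ_fixed hp (f.symm_apply_eq.2 hp.symm)]
  exact hVε _ hpV _ ((hfwd (n - (M + 1)) (hM _ (hxW _))).1 n (by omega))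

end Shadowing

/-- A simple homeomorphism of a compact metric space has the shadowing property. -/
theorem stmt12 {X : Type*} [MetricSpace X] [CompactSpace X] (f : X ≃ₜ X)
    (hsimple : ∃ p q : X, SimpleSystem f p q) :
    ShadowingZ ⇑f ⇑f.symm := by
  obtain ⟨p, q, hfp, hfq, hp, hq, hconv⟩ := hsimple
  intro ε hε
  obtain ⟨V, hV, hpV, hVp, hfV⟩ := hp.2.2 (ball p (ε / 2)) isOpen_ball
    (singleton_subset_iff.2 (mem_ball_self (half_pos hε)))
  obtain ⟨W, hW, hqW, hWq, hfW⟩ := hq.2.2 (ball q (ε / 2)) isOpen_ball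
    (singleton_subset_iff.2 (mem_ball_self (half_pos hε)))
  have hqfW : q ∈ f.symm '' W := ⟨q, hqW rfl, f.symm_apply_eq.2 hfq.symm⟩
  obtain ⟨M, hM⟩ : ∃ M, ∀ z ∈ (f.symm '' W)ᶜ, f^[M] z ∈ V := by
    refine ((f.symm.isOpen_image.2 hW).isClosed_compl.isCompact).exists_forall_iterate_mem
      f.continuous hV (mapsTo_iff_image_subset.2 (subset_closure.trans hfV)) fun z hz => ?_
    by_cases hzp : z = p
    · exact ⟨0, hzp ▸ hpV rfl⟩
    have hzq : z ≠ q := fun h => hz (h ▸ hqfW)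
    exact ((hconv z hzp hzq).1.eventually_mem (hV.mem_nhds (hpV rfl))).exists
  exact exists_shadow_of_trapping_regions f hfp hfq hV hW (hpV rfl) (hqW rfl) hfV hfW hε
    (dist_lt_of_subset_ball hVp) (dist_lt_of_subset_ball hWq) hM
end
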